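/- A finite-dimensional complex Lie algebra admits a periodic derivation if and only if it admits a periodic derivation of order dividing six (i.e., with D^6 = id). -/

import Mathlib

/-!
A periodic derivation `D` is diagonalisable with eigenvalues of modulus one, and its eigenspaces
satisfy `⁅L_μ, L_ν⁆ ⊆ L_{μ+ν}`. If `μ`, `ν` and `μ + ν` all have modulus one, then `t = ν / μ`
satisfies `t² + t + 1 = 0`, so `ν = t μ` and `μ + ν = (1 + t) μ` with `t` and `1 + t` sixth roots
of unity. Any map `ℂ → ℂ` that commutes with multiplication by sixth roots of unity and sends
`ℂˣ` to sixth roots of unity is therefore additive on such triples, and letting it act by `φ μ`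
on `L_μ` gives a derivation whose sixth power is the identity.
-/

open Polynomial

namespace Module.End

variable {K M N : Type*} [Field K] [AddCommGroup M] [Module K M] [AddCommGroup N] [Module K N]

lemma isSemisimple_of_pow_eq_one {f : End K M} {m : ℕ} (hm : (m : K) ≠ 0) (hf : f ^ m = 1) :
    f.IsSemisimple :=
  isSemisimple_of_squarefree_aeval_eq_zero (X_pow_sub_one_separable_iff.mpr hm).squarefree
    (by rw [map_sub, map_pow, aeval_X, map_one, hf, sub_self])

lemma HasEigenvalue.pow_eq_one {f : End K M} {μ : K} (hμ : f.HasEigenvalue μ) {m : ℕ}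
    (hf : f ^ m = 1) : μ ^ m = 1 := by
  obtain ⟨x, hx⟩ := hμ.exists_hasEigenvector
  have h : μ ^ m • x = (1 : K) • x := by rw [← hx.pow_apply, hf, one_apply, one_smul]
  exact smul_left_injective K hx.2 h

lemma ext_of_iSup_eigenspace_eq_top {f : End K M} (hf : ⨆ μ, f.eigenspace μ = ⊤)
    {g h : M →ₗ[K] N} (hgh : ∀ μ, ∀ x ∈ f.eigenspace μ, g x = h x) : g = h :=
  LinearMap.ext_on (s := ⋃ μ, (f.eigenspace μ : Set M)) (by rw [← Submodule.iSup_eq_span, hf])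
    fun x hx ↦ by obtain ⟨μ, hx⟩ := Set.mem_iUnion.mp hx; exact hgh μ x hx

lemma ext₂_of_iSup_eigenspace_eq_top {f : End K M} (hf : ⨆ μ, f.eigenspace μ = ⊤)
    {B₁ B₂ : M →ₗ[K] M →ₗ[K] N}
    (hB : ∀ μ ν, ∀ x ∈ f.eigenspace μ, ∀ y ∈ f.eigenspace ν, B₁ x y = B₂ x y) : B₁ = B₂ :=
  ext_of_iSup_eigenspace_eq_top hf fun μ x hx ↦
    ext_of_iSup_eigenspace_eq_top hf fun ν y hy ↦ hB μ ν x hx y hy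

lemma exists_aeval_apply_eq_smul_of_mem_eigenspace [FiniteDimensional K M] (f : End K M)
    (φ : K → K) : ∃ p : K[X], ∀ μ, ∀ x ∈ f.eigenspace μ, aeval f p x = φ μ • x := by
  obtain ⟨p, hp⟩ := (exists_eval_eq_iff (fun μ : f.Eigenvalues ↦ (μ : K)) (fun μ ↦ φ μ)).mpr
    fun μ ν h ↦ by rw [Subtype.ext h]
  refine ⟨p, fun μ x hx ↦ ?_⟩
  rcases eq_or_ne x 0 with rfl | hx0
  · simp
  · have hv : f.HasEigenvector μ x := ⟨hx, hx0⟩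
    rw [aeval_apply_of_hasEigenvector hv]
    exact congrArg (· • x) (hp ⟨μ, hasEigenvalue_of_hasEigenvector hv⟩)

end Module.End

namespace LieDerivation

open Module.End

variable {K L : Type*} [Field K] [LieRing L] [LieAlgebra K L]

lemma lie_mem_eigenspace (D : LieDerivation K L L) {μ ν : K} {x y : L}
    (hx : x ∈ eigenspace (D : Module.End K L) μ) (hy : y ∈ eigenspace (D : Module.End K L) ν) :
    ⁅x, y⁆ ∈ eigenspace (D : Module.End K L) (μ + ν) := by
  rw [mem_eigenspace_iff, coeFn_coe] at hx hy ⊢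
  rw [apply_lie_eq_add, hx, hy, lie_smul, smul_lie, add_smul, add_comm]

lemma exists_apply_eq_smul_of_mem_eigenspace [FiniteDimensional K L] (D : LieDerivation K L L)
    (hD : ⨆ μ, eigenspace (D : Module.End K L) μ = ⊤) (φ : K → K)
    (hφ : ∀ μ ν, HasEigenvalue (D : Module.End K L) μ → HasEigenvalue (D : Module.End K L) ν →
      HasEigenvalue (D : Module.End K L) (μ + ν) → φ (μ + ν) = φ μ + φ ν) :
    ∃ D' : LieDerivation K L L, ∀ μ, ∀ x ∈ eigenspace (D : Module.End K L) μ, D' x = φ μ • x := by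
  obtain ⟨p, hp⟩ := exists_aeval_apply_eq_smul_of_mem_eigenspace (D : Module.End K L) φ
  set g := aeval (D : Module.End K L) p
  have hg : ∀ μ ν, ∀ x ∈ eigenspace (D : Module.End K L) μ,
      ∀ y ∈ eigenspace (D : Module.End K L) ν, g ⁅x, y⁆ = ⁅x, g y⁆ - ⁅y, g x⁆ := by
    intro μ ν x hx y hy
    have hxy := D.lie_mem_eigenspace hx hy
    rw [hp _ _ hxy, hp μ x hx, hp ν y hy, lie_smul, lie_smul, ← lie_skew y x, smul_neg,
      sub_neg_eq_add, ← add_smul]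
    rcases eq_or_ne ⁅x, y⁆ 0 with hxy0 | hxy0
    · simp [hxy0]
    · have hx0 : x ≠ 0 := by rintro rfl; exact hxy0 (zero_lie y)
      have hy0 : y ≠ 0 := by rintro rfl; exact hxy0 (lie_zero x)
      rw [hφ μ ν (hasEigenvalue_of_hasEigenvector ⟨hx, hx0⟩)
        (hasEigenvalue_of_hasEigenvector ⟨hy, hy0⟩) (hasEigenvalue_of_hasEigenvector ⟨hxy, hxy0⟩),
        add_comm]
  have hB := ext₂_of_iSup_eigenspace_eq_top hD
    (B₁ := (LieAlgebra.ad K L : L →ₗ[K] Module.End K L).compr₂ g)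
    (B₂ := (LieAlgebra.ad K L : L →ₗ[K] Module.End K L).compl₂ g -
      (LieAlgebra.ad K L : L →ₗ[K] Module.End K L).flip ∘ₗ g) (by simpa using hg)
  exact ⟨⟨g, fun x y ↦ by simpa using LinearMap.congr_fun₂ hB x y⟩, hp⟩

end LieDerivation

noncomputable def rootOfUnityPhase (n : ℕ) (a : ℂ) : ℂ :=
  a / (⟦a⟧ : Quotient (MulAction.orbitRel (rootsOfUnity n ℂ) ℂ)).out

lemma rootOfUnityPhase_mul {n : ℕ} [NeZero n] {t : ℂ} (ht : t ^ n = 1) (a : ℂ) :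
    rootOfUnityPhase n (t * a) = t * rootOfUnityPhase n a := by
  have hclass : (⟦t * a⟧ : Quotient (MulAction.orbitRel (rootsOfUnity n ℂ) ℂ)) = ⟦a⟧ :=
    Quotient.sound ⟨rootsOfUnity.mkOfPowEq t ht, rfl⟩
  rw [rootOfUnityPhase, rootOfUnityPhase, hclass, mul_div_assoc]

lemma rootOfUnityPhase_pow {n : ℕ} {a : ℂ} (ha : a ≠ 0) : rootOfUnityPhase n a ^ n = 1 := by
  obtain ⟨ζ, hζ⟩ := Quotient.mk_out (s := MulAction.orbitRel (rootsOfUnity n ℂ) ℂ) a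
  have hout : (⟦a⟧ : Quotient (MulAction.orbitRel (rootsOfUnity n ℂ) ℂ)).out =
      ((ζ : ℂˣ) : ℂ) * a := hζ.symm
  rw [rootOfUnityPhase, hout, div_mul_cancel_right₀ ha, inv_pow, ← Units.val_pow_eq_pow_val,
    (mem_rootsOfUnity n _).mp ζ.2, Units.val_one, inv_one]

lemma Complex.sq_add_mul_add_sq_eq_zero_of_norm_eq_one {a b : ℂ} (ha : ‖a‖ = 1) (hb : ‖b‖ = 1)
    (hab : ‖a + b‖ = 1) : a ^ 2 + a * b + b ^ 2 = 0 := by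
  have ha0 : a ≠ 0 := by rintro rfl; simp at ha
  have hb0 : b ≠ 0 := by rintro rfl; simp at hb
  have hab0 : a + b ≠ 0 := by intro h; simp [h] at hab
  have hinv : (a + b)⁻¹ = a⁻¹ + b⁻¹ := by
    rw [inv_eq_conj ha, inv_eq_conj hb, inv_eq_conj hab, map_add]
  field_simp at hinv
  linear_combination -hinv

lemma rootOfUnityPhase_six_add_of_norm_eq_one {a b : ℂ} (ha : ‖a‖ = 1) (hb : ‖b‖ = 1)
    (hab : ‖a + b‖ = 1) :
    rootOfUnityPhase 6 (a + b) = rootOfUnityPhase 6 a + rootOfUnityPhase 6 b := by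
  have ha0 : a ≠ 0 := by rintro rfl; simp at ha
  obtain ⟨t, rfl⟩ : ∃ t, b = t * a := ⟨b / a, (div_mul_cancel₀ b ha0).symm⟩
  have ht : t ^ 2 + t + 1 = 0 := by
    have h := Complex.sq_add_mul_add_sq_eq_zero_of_norm_eq_one ha hb hab
    exact (mul_eq_zero.mp (by linear_combination h : a ^ 2 * (t ^ 2 + t + 1) = 0)).resolve_left
      (pow_ne_zero 2 ha0)
  have ht6 : t ^ 6 = 1 := by linear_combination (t ^ 4 - t ^ 3 + t - 1) * ht
  have ht6' : (1 + t) ^ 6 = 1 := by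
    rw [show 1 + t = -t ^ 2 by linear_combination ht]
    linear_combination (t ^ 6 + 1) * ht6
  rw [← one_add_mul, rootOfUnityPhase_mul ht6, rootOfUnityPhase_mul ht6', one_add_mul]

open Module.End in
theorem periodic_iff_order_dividing_six (L : Type*) [LieRing L] [LieAlgebra ℂ L]
    [FiniteDimensional ℂ L] :
    (∃ D : LieDerivation ℂ L L, ∃ m : ℕ, 1 ≤ m ∧ D.toLinearMap ^ m = 1) ↔
    (∃ D : LieDerivation ℂ L L, D.toLinearMap ^ 6 = 1) := by
  refine ⟨fun ⟨D, m, hm, hDm⟩ ↦ ?_, fun ⟨D, hD⟩ ↦ ⟨D, 6, by norm_num, hD⟩⟩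
  have hm0 : m ≠ 0 := by omega
  have hdiag := (isSemisimple_of_pow_eq_one (Nat.cast_ne_zero.mpr hm0) hDm).iSup_eigenspace_eq_top
  have hnorm : ∀ μ, HasEigenvalue D.toLinearMap μ → ‖μ‖ = 1 := fun μ hμ ↦
    Complex.norm_eq_one_of_pow_eq_one (hμ.pow_eq_one hDm) hm0
  obtain ⟨D', hD'⟩ := D.exists_apply_eq_smul_of_mem_eigenspace hdiag (rootOfUnityPhase 6)
    fun μ ν hμ hν hμν ↦
      rootOfUnityPhase_six_add_of_norm_eq_one (hnorm μ hμ) (hnorm ν hν) (hnorm _ hμν)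
  refine ⟨D', ext_of_iSup_eigenspace_eq_top hdiag fun μ x hx ↦ ?_⟩
  rcases eq_or_ne x 0 with rfl | hx0
  · simp
  · have hv : HasEigenvector D'.toLinearMap (rootOfUnityPhase 6 μ) x :=
      ⟨mem_eigenspace_iff.mpr (hD' μ x hx), hx0⟩
    have hμ0 : μ ≠ 0 := by
      rintro rfl; simpa using hnorm 0 (hasEigenvalue_of_hasEigenvector ⟨hx, hx0⟩)
    rw [hv.pow_apply, rootOfUnityPhase_pow hμ0, one_smul, one_apply]
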